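/- Let G be a graph, I ⊆ [m], U ⊆ V(G) with χ(G[U]) = c. If |I| ≥ c, then the chromatic number of the subgraph of R_m(G) induced by [I,U] equals c. -/

import Mathlib

open SimpleGraph

universe u
variable {V : Type u}

/-- Closed neighborhood of a vertex set. -/
def closedNbhd (G : SimpleGraph V) (U : Set V) : Set V :=
  U ∪ {v | ∃ u ∈ U, G.Adj u v}

/-- Bag `X_ℓ = N[{v_1,…,v_ℓ}] \ {v_1,…,v_{ℓ-1}}` of the enumeration `σ`. -/
def bagX {n : ℕ} (G : SimpleGraph V) (σ : Fin n ≃ V) (ℓ : Fin n) : Set V :=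
  closedNbhd G {v | ∃ j ≤ ℓ, v = σ j} \ {v | ∃ j < ℓ, v = σ j}

/-- Chromatic number of the subgraph induced by `S`. -/
noncomputable def chrom (G : SimpleGraph V) (S : Set V) : ℕ :=
  sInf {k | (G.induce S).Colorable k}

/-- Chromatic number of the path-decomposition `P_σ^G`. -/
noncomputable def decompChrom {n : ℕ} (G : SimpleGraph V) (σ : Fin n ≃ V) : ℕ :=
  sInf {k | ∀ ℓ, (G.induce (bagX G σ ℓ)).Colorable k}

/-- `B` is a path-decomposition of `G`. -/
def IsPathDecomp (G : SimpleGraph V) {s : ℕ} (B : Fin s → Set V) : Prop :=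
  (∀ v, ∃ t, v ∈ B t) ∧
  (∀ u v, G.Adj u v → ∃ t, u ∈ B t ∧ v ∈ B t) ∧
  (∀ v (t₁ t₂ t₃ : Fin s), t₁ ≤ t₂ → t₂ ≤ t₃ → v ∈ B t₁ → v ∈ B t₃ → v ∈ B t₂)

/-- Path-chromatic number. -/
noncomputable def pathChromatic (G : SimpleGraph V) : ℕ :=
  sInf {k | ∃ (s : ℕ) (B : Fin s → Set V), IsPathDecomp G B ∧
    ∀ t, (G.induce (B t)).Colorable k}

/-- `(T, B)` is a tree-decomposition of `G`. -/
def IsTreeDecomp {ι : Type u} (G : SimpleGraph V) (T : SimpleGraph ι) (B : ι → Set V) : Prop :=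
  T.IsTree ∧
  (∀ v, ∃ t, v ∈ B t) ∧
  (∀ u v, G.Adj u v → ∃ t, u ∈ B t ∧ v ∈ B t) ∧
  (∀ v, (T.induce {t | v ∈ B t}).Connected)

/-- Tree-chromatic number. -/
noncomputable def treeChromatic (G : SimpleGraph V) : ℕ :=
  sInf {k | ∃ (ι : Type u) (T : SimpleGraph ι) (B : ι → Set V),
    IsTreeDecomp G T B ∧ ∀ t, (G.induce (B t)).Colorable k}

/-- A special enumeration. -/
def IsSpecial {n : ℕ} (G : SimpleGraph V) (σ : Fin n ≃ V) : Prop :=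
  decompChrom G σ = pathChromatic G ∧
  ∀ i : Fin n, chrom G (bagX G σ i) = pathChromatic G →
    ∀ j : Fin n, j < i → ¬ G.Adj (σ j) (σ i)

/-- The graph `R_m(G)`; the vertex `(i, none)` plays the role of `(i, v₀)`. -/
def Rm (G : SimpleGraph V) (m : ℕ) : SimpleGraph (Fin m × Option V) :=
  SimpleGraph.fromRel (fun p q =>
    (p.1 = q.1 ∧ p.2 = none) ∨
    (p.1 ≠ q.1 ∧ ∃ u v, p.2 = some u ∧ q.2 = some v ∧ G.Adj u v))

/-- `[I, U] = { (i, v) : i ∈ I, v ∈ U }` inside `R_m(G)`. -/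
def box {m : ℕ} (I : Set (Fin m)) (U : Set V) : Set (Fin m × Option V) :=
  {p | p.1 ∈ I ∧ ∃ v ∈ U, p.2 = some v}

/-- Index of the first vertex in the enumeration `μ` satisfying `P`. -/
noncomputable def firstIdx {N : ℕ} {W : Type*} (μ : Fin N ≃ W) (P : W → Prop) : ℕ :=
  sInf {ℓ : ℕ | ∃ h : ℓ < N, P (μ ⟨ℓ, h⟩)}

/-- The cycle `C_n`: `v_j ~ v_{j'}` iff `|j - j'| ∈ {1, n-1}`. -/
def cyc (n : ℕ) : SimpleGraph (Fin n) :=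
  SimpleGraph.fromRel (fun a b => (b : ℕ) - (a : ℕ) = 1 ∨ (b : ℕ) - (a : ℕ) = n - 1)

/-- The Mycielskian of a graph. -/
def mycielskian (G : SimpleGraph V) : SimpleGraph (Option (V ⊕ V)) :=
  SimpleGraph.fromRel (fun a b =>
    match a, b with
    | some (Sum.inl u), some (Sum.inl v) => G.Adj u v
    | some (Sum.inr u), some (Sum.inl v) => G.Adj u v
    | none, some (Sum.inr _) => True
    | _, _ => False)

/-- Vertex types and graphs of the Mycielski family: `MycS 2` is a single edge. -/
def MycS : ℕ → Σ W : Type, SimpleGraph W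
  | 0 => ⟨Empty, ⊥⟩
  | 1 => ⟨Empty, ⊥⟩
  | 2 => ⟨Fin 2, ⊤⟩
  | (n + 3) => ⟨Option ((MycS (n + 2)).1 ⊕ (MycS (n + 2)).1), mycielskian (MycS (n + 2)).2⟩

/-- The vertex type of the `k`-Mycielski graph. -/
def MycV (k : ℕ) : Type := (MycS k).1

/-- The `k`-Mycielski graph `M_k`. -/
def Myc (k : ℕ) : SimpleGraph (MycV k) := (MycS k).2

/-! The projection `(i, v) ↦ v` is a homomorphism `⟨[I, U]⟩ → G[U]`. Conversely, if `φ` is a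
`c`-colouring of `G[U]` and `ι` injects the colours into `I`, then `v ↦ (ι (φ v), v)` is a
homomorphism `G[U] → ⟨[I, U]⟩`: adjacent vertices get distinct colours, hence distinct rows.
Homomorphisms in both directions force equal chromatic numbers. -/

theorem chrom_eq_of_homs {W : Type*} {G : SimpleGraph V} {H : SimpleGraph W} {S : Set V}
    {T : Set W} (f : G.induce S →g H.induce T) (g : H.induce T →g G.induce S) :
    chrom G S = chrom H T := by
  have : {k | (G.induce S).Colorable k} = {k | (H.induce T).Colorable k} :=
    Set.ext fun _ => ⟨Colorable.of_hom g, Colorable.of_hom f⟩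
  rw [chrom, chrom, this]

theorem colorable_chrom [Fintype V] (G : SimpleGraph V) (S : Set V) :
    (G.induce S).Colorable (chrom G S) := by
  classical
  exact Nat.sInf_mem (s := {k | (G.induce S).Colorable k}) ⟨_, colorable_of_fintype _⟩

namespace Rm
variable {G : SimpleGraph V} {m : ℕ}

@[simp] theorem adj_some {i j : Fin m} {u v : V} :
    (Rm G m).Adj (i, some u) (j, some v) ↔ i ≠ j ∧ G.Adj u v := by
  simp only [Rm, fromRel_adj]
  grind [G.adj_symm, G.ne_of_adj]

def boxProjHom (I : Set (Fin m)) (U : Set V) : (Rm G m).induce (box I U) →g G.induce U where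
  toFun p := ⟨p.1.2.get (by obtain ⟨-, v, -, hv⟩ := p.2; simp [hv]),
    by obtain ⟨-, v, hv, hpv⟩ := p.2; simpa [hpv] using hv⟩
  map_rel' {p q} h := by
    rcases p with ⟨⟨i, _ | u⟩, hp⟩
    · simp [box] at hp
    rcases q with ⟨⟨j, _ | v⟩, hq⟩
    · simp [box] at hq
    exact (adj_some.mp h).2

def boxHomOfColoring {α : Type*} {I : Set (Fin m)} {U : Set V} (C : (G.induce U).Coloring α)
    (f : α ↪ I) : G.induce U →g (Rm G m).induce (box I U) where
  toFun u := ⟨((f (C u)).1, some u.1), (f (C u)).2, u.1, u.2, rfl⟩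
  map_rel' h := adj_some.mpr ⟨fun hij => C.valid h (f.injective (Subtype.ext hij)), h⟩

end Rm

/-- If `χ(G[U]) = c` and `|I| ≥ c`, then the chromatic number of `⟨[I,U]⟩` is `c`. -/
theorem stmt_5 {V : Type u} [Fintype V] (G : SimpleGraph V) {m : ℕ}
    (I : Set (Fin m)) (U : Set V) (c : ℕ) (hc : chrom G U = c) (hI : c ≤ I.ncard) :
    chrom (Rm G m) (box I U) = c := by
  classical
  obtain ⟨C⟩ : (G.induce U).Colorable c := hc ▸ colorable_chrom G U
  obtain ⟨f⟩ : Nonempty (Fin c ↪ I) :=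
    Function.Embedding.nonempty_of_card_le (by simpa [Set.ncard_eq_toFinset_card'] using hI)
  rw [← hc]
  exact chrom_eq_of_homs (Rm.boxProjHom I U) (Rm.boxHomOfColoring C f)
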